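/- arXiv:1506.09144 — 2 statements merged into one kernel-verified Lean document; each statement's English description precedes it below -/
import Mathlib

section
/- For a proper domain Ω in real projective space, C_Ω is a metric on Ω: it is nonnegative, symmetric, satisfies the triangle inequality, and C_Ω(p,q) = 0 if and only if p = q. -/
open Projectivization Filter Topology

/-- Real projective space `P(ℝ^{d+1})`. -/
abbrev PV (d : ℕ) := Projectivization ℝ (Fin (d+1) → ℝ)

/-- The quotient topology on real projective space. -/
instance (d : ℕ) : TopologicalSpace (PV d) :=
  inferInstanceAs (TopologicalSpace (Quotient (projectivizationSetoid ℝ (Fin (d+1) → ℝ))))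

/-- The dual set `Ω*`: (classes of) nonzero linear functionals whose kernel misses `Ω`. -/
def dualSet {d : ℕ} (Ω : Set (PV d)) : Set (Module.Dual ℝ (Fin (d+1) → ℝ)) :=
  {f | f ≠ 0 ∧ ∀ p ∈ Ω, f p.rep ≠ 0}

/-- `log |f(p)g(q)/(f(q)g(p))|`, computed using representatives (it is independent of
the choice of representatives of `p`, `q`, `f`, `g`). -/
noncomputable def logRatio {d : ℕ} (f g : Module.Dual ℝ (Fin (d+1) → ℝ)) (p q : PV d) : ℝ :=
  Real.log (|f p.rep * g q.rep| / |f q.rep * g p.rep|)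

/-- The Hilbert-type cross-ratio function `C_Ω(p,q) = sup_{f,g ∈ Ω*} log|f(p)g(q)/(f(q)g(p))|`. -/
noncomputable def CC {d : ℕ} (Ω : Set (PV d)) (p q : PV d) : ℝ :=
  sSup {t | ∃ f ∈ dualSet Ω, ∃ g ∈ dualSet Ω, t = logRatio f g p q}

/-- A proper domain: open, connected, and bounded in some affine chart (equivalently,
its closure misses some projective hyperplane). -/
def IsProperDomain {d : ℕ} (Ω : Set (PV d)) : Prop :=
  IsOpen Ω ∧ IsConnected Ω ∧
    ∃ f : Module.Dual ℝ (Fin (d+1) → ℝ), f ≠ 0 ∧ ∀ p ∈ closure Ω, f p.rep ≠ 0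

/-!
The triangle inequality, symmetry and `C_Ω(p,p) = 0` hold for each single ratio
`log |f(p)g(q)/(f(q)g(p))|`, hence for the supremum. The supremum is finite because the cone
over the open set `Ω` contains a ball around a representative of `q`; a functional without
zeros on that ball satisfies `|f(v)| ≤ |f(q)|` for all `v` in the centred ball, so
`|f(p)|/|f(q)|` is bounded uniformly in `f ∈ Ω*`.

For `p ≠ q`, let `h` be a functional with no zero on `closure Ω`. Compactness of the closure
makes `h` an interior point of `Ω*`, so `f = h + tφ ∈ Ω*` for small `t > 0`, where `φ(q) = 0`
and `φ(p) = h(p)`. Then `C_Ω(p,q) ≥ log |f(p)h(q)/(f(q)h(p))| = log (1 + t) > 0`.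
-/

open Metric

theorem LinearMap.abs_apply_le_of_forall_mem_ball_apply_ne_zero {E : Type*}
    [SeminormedAddCommGroup E] [NormedSpace ℝ E] {f : E →ₗ[ℝ] ℝ} {y : E} {ε : ℝ}
    (hf : ∀ z ∈ ball y ε, f z ≠ 0) {v : E} (hv : ‖v‖ < ε) : |f v| ≤ |f y| := by
  by_contra! hlt
  have hfv : f v ≠ 0 := abs_pos.1 ((abs_nonneg _).trans_lt hlt)
  set t := -(f y / f v) with ht_def
  have ht : |t| < 1 := by
    rw [abs_neg, abs_div, div_lt_one (abs_pos.2 hfv)]; exact hlt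
  apply hf (y + t • v)
  · rw [mem_ball, dist_eq_norm, add_sub_cancel_left, norm_smul, Real.norm_eq_abs]
    calc |t| * ‖v‖ ≤ ‖v‖ := mul_le_of_le_one_left (norm_nonneg v) ht.le
      _ < ε := hv
  · rw [map_add, map_smul, smul_eq_mul, ht_def, neg_mul, div_mul_cancel₀ _ hfv, add_neg_cancel]

theorem LinearMap.exists_abs_apply_le_mul_of_forall_mem_ball {E : Type*}
    [SeminormedAddCommGroup E] [NormedSpace ℝ E] {y : E} {ε : ℝ} (hε : 0 < ε) (x : E) :
    ∃ M, ∀ f : E →ₗ[ℝ] ℝ, (∀ z ∈ ball y ε, f z ≠ 0) → |f x| ≤ M * |f y| := by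
  have hx : 0 < ‖x‖ + 1 := by positivity
  refine ⟨(‖x‖ + 1) / ε, fun f hf => ?_⟩
  have hsmall : ‖(ε / (‖x‖ + 1)) • x‖ < ε := by
    rw [norm_smul, Real.norm_of_nonneg (by positivity), div_mul_eq_mul_div,
      div_lt_iff₀ hx]
    nlinarith
  have := f.abs_apply_le_of_forall_mem_ball_apply_ne_zero hf hsmall
  rw [map_smul, smul_eq_mul, abs_mul, abs_of_pos (by positivity)] at this
  rw [div_mul_eq_mul_div, le_div_iff₀ hε]
  calc |f x| * ε = (‖x‖ + 1) * (ε / (‖x‖ + 1) * |f x|) := by field_simp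
    _ ≤ (‖x‖ + 1) * |f y| := by gcongr

theorem IsCompact.exists_pos_forall_abs_mul_lt {X : Type*} [TopologicalSpace X] {K : Set X}
    (hK : IsCompact K) {a b : X → ℝ} (ha : ContinuousOn a K) (hb : ContinuousOn b K)
    (hb0 : ∀ x ∈ K, b x ≠ 0) : ∃ t > 0, ∀ x ∈ K, |t * a x| < |b x| := by
  obtain ⟨C, hC⟩ := hK.exists_bound_of_continuousOn (ha.div hb hb0)
  refine ⟨(|C| + 1)⁻¹, by positivity, fun x hx => ?_⟩
  have hbx : 0 < |b x| := abs_pos.2 (hb0 x hx)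
  have hCx : |a x| ≤ |C| * |b x| := by
    have := (hC x hx).trans (le_abs_self C)
    rwa [Real.norm_eq_abs, Pi.div_apply, abs_div, div_le_iff₀ hbx] at this
  rw [abs_mul, abs_of_pos (by positivity), inv_mul_lt_iff₀ (by positivity)]
  nlinarith

section Cone

variable {d : ℕ}

def cone (S : Set (PV d)) : Set (Fin (d+1) → ℝ) :=
  {v | ∃ hv : v ≠ 0, Projectivization.mk ℝ v hv ∈ S}

theorem rep_mem_cone {S : Set (PV d)} {p : PV d} (hp : p ∈ S) : p.rep ∈ cone S :=
  ⟨p.rep_nonzero, by rwa [mk_rep]⟩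

theorem smul_mem_cone {S : Set (PV d)} {v : Fin (d+1) → ℝ} (hv : v ∈ cone S) {a : ℝ}
    (ha : a ≠ 0) : a • v ∈ cone S := by
  obtain ⟨hv0, hmem⟩ := hv
  refine ⟨smul_ne_zero ha hv0, ?_⟩
  rwa [(mk_eq_mk_iff' ℝ _ _ _ hv0).2 ⟨a, rfl⟩]

theorem apply_ne_zero_of_mem_cone {S : Set (PV d)} {f : Module.Dual ℝ (Fin (d+1) → ℝ)}
    (hf : ∀ p ∈ S, f p.rep ≠ 0) {v : Fin (d+1) → ℝ} (hv : v ∈ cone S) : f v ≠ 0 := by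
  obtain ⟨hv0, hmem⟩ := hv
  obtain ⟨a, ha⟩ := exists_smul_eq_mk_rep ℝ v hv0
  have := hf _ hmem
  rw [← ha, Units.smul_def, map_smul, smul_eq_mul] at this
  exact right_ne_zero_of_mul this

theorem isOpen_cone {S : Set (PV d)} (hS : IsOpen S) : IsOpen (cone S) := by
  have hπ : Continuous fun v : {v : Fin (d+1) → ℝ // v ≠ 0} =>
      (Projectivization.mk ℝ v.1 v.2 : PV d) := continuous_quotient_mk'
  convert isOpen_compl_singleton.isOpenMap_subtype_val _ (hS.preimage hπ) using 1
  ext v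
  exact ⟨fun ⟨hv, hmem⟩ => ⟨⟨v, hv⟩, hmem, rfl⟩, by rintro ⟨⟨w, hw⟩, hmem, rfl⟩; exact ⟨hw, hmem⟩⟩

theorem isCompact_sphere_inter_cone {S : Set (PV d)} (hS : IsClosed S) :
    IsCompact (sphere 0 1 ∩ cone S) := by
  -- on the unit sphere, which misses `0`, the cone over `S` is the complement of that over `Sᶜ`
  have : sphere 0 1 ∩ cone S = sphere (0 : Fin (d+1) → ℝ) 1 ∩ (cone Sᶜ)ᶜ := by
    ext v
    simp only [Set.mem_inter_iff, Set.mem_compl_iff, cone, Set.mem_ofPred_eq, not_exists,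
      not_not, mem_sphere_zero_iff_norm]
    refine and_congr_right fun hv => ⟨fun ⟨_, h⟩ _ => h, fun h => ?_⟩
    have hv0 : v ≠ 0 := ne_zero_of_norm_ne_zero (by rw [hv]; exact one_ne_zero)
    exact ⟨hv0, h hv0⟩
  rw [this]
  exact (isCompact_sphere 0 1).inter_right (isOpen_cone hS.isOpen_compl).isClosed_compl

end Cone

section CrossRatio

variable {d : ℕ} {Ω : Set (PV d)} {f g : Module.Dual ℝ (Fin (d+1) → ℝ)} {p q r : PV d}

theorem logRatio_self_left (f : Module.Dual ℝ (Fin (d+1) → ℝ)) (p q : PV d) :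
    logRatio f f p q = 0 := by
  rw [logRatio, mul_comm (f q.rep), Real.log_div_self]

theorem logRatio_self (f g : Module.Dual ℝ (Fin (d+1) → ℝ)) (p : PV d) :
    logRatio f g p p = 0 :=
  Real.log_div_self _

theorem logRatio_comm (f g : Module.Dual ℝ (Fin (d+1) → ℝ)) (p q : PV d) :
    logRatio f g p q = logRatio g f q p := by
  rw [logRatio, logRatio, mul_comm (f p.rep), mul_comm (f q.rep)]

theorem logRatio_add (hf : f ∈ dualSet Ω) (hg : g ∈ dualSet Ω)
    (hp : p ∈ Ω) (hq : q ∈ Ω) (hr : r ∈ Ω) :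
    logRatio f g p r + logRatio f g r q = logRatio f g p q := by
  have := hf.2 p hp; have := hf.2 q hq; have := hf.2 r hr
  have := hg.2 p hp; have := hg.2 q hq; have := hg.2 r hr
  rw [logRatio, logRatio, logRatio, ← Real.log_mul (by positivity) (by positivity)]
  congr 1
  field_simp
  simp only [abs_mul]
  ring

theorem logRatio_le_log_mul {M₁ M₂ : ℝ} (hfp : f p.rep ≠ 0) (hgq : g q.rep ≠ 0)
    (hfq : f q.rep ≠ 0) (hgp : g p.rep ≠ 0)
    (hf : |f p.rep| ≤ M₁ * |f q.rep|) (hg : |g q.rep| ≤ M₂ * |g p.rep|) :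
    logRatio f g p q ≤ Real.log (M₁ * M₂) := by
  refine Real.log_le_log (by positivity) ?_
  rw [div_le_iff₀ (by positivity), abs_mul, abs_mul]
  calc |f p.rep| * |g q.rep| ≤ (M₁ * |f q.rep|) * (M₂ * |g p.rep|) :=
        mul_le_mul hf hg (abs_nonneg _) ((abs_nonneg _).trans hf)
    _ = M₁ * M₂ * (|f q.rep| * |g p.rep|) := by ring

theorem exists_abs_apply_le_mul_abs_apply_rep (hΩ : IsOpen Ω) (hq : q ∈ Ω)
    (x : Fin (d+1) → ℝ) : ∃ M, ∀ f ∈ dualSet Ω, |f x| ≤ M * |f q.rep| := by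
  obtain ⟨ε, hε, hball⟩ := Metric.isOpen_iff.1 (isOpen_cone hΩ) _ (rep_mem_cone hq)
  obtain ⟨M, hM⟩ := LinearMap.exists_abs_apply_le_mul_of_forall_mem_ball hε x
  exact ⟨M, fun f hf => hM f fun z hz => apply_ne_zero_of_mem_cone hf.2 (hball hz)⟩

theorem logRatio_le_CC (hΩ : IsOpen Ω) (hf : f ∈ dualSet Ω) (hg : g ∈ dualSet Ω)
    (hp : p ∈ Ω) (hq : q ∈ Ω) : logRatio f g p q ≤ CC Ω p q := by
  obtain ⟨M₁, hM₁⟩ := exists_abs_apply_le_mul_abs_apply_rep hΩ hq p.rep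
  obtain ⟨M₂, hM₂⟩ := exists_abs_apply_le_mul_abs_apply_rep hΩ hp q.rep
  refine le_csSup ⟨Real.log (M₁ * M₂), ?_⟩ ⟨f, hf, g, hg, rfl⟩
  rintro _ ⟨f', hf', g', hg', rfl⟩
  exact logRatio_le_log_mul (hf'.2 p hp) (hg'.2 q hq) (hf'.2 q hq) (hg'.2 p hp)
    (hM₁ f' hf') (hM₂ g' hg')

theorem CC_nonneg (hΩ : IsOpen Ω) (hne : (dualSet Ω).Nonempty) (hp : p ∈ Ω) (hq : q ∈ Ω) :
    0 ≤ CC Ω p q := by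
  obtain ⟨h, hh⟩ := hne
  simpa only [logRatio_self_left] using logRatio_le_CC hΩ hh hh hp hq

theorem CC_self (Ω : Set (PV d)) (p : PV d) : CC Ω p p = 0 := by
  have hzero : ∀ t ∈ {t | ∃ f ∈ dualSet Ω, ∃ g ∈ dualSet Ω, t = logRatio f g p p}, t = 0 := by
    rintro _ ⟨f, -, g, -, rfl⟩
    exact logRatio_self f g p
  exact le_antisymm (Real.sSup_nonpos fun t ht => (hzero t ht).le)
    (Real.sSup_nonneg fun t ht => (hzero t ht).ge)

theorem CC_comm (Ω : Set (PV d)) (p q : PV d) : CC Ω p q = CC Ω q p := by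
  have (p q : PV d) : {t | ∃ f ∈ dualSet Ω, ∃ g ∈ dualSet Ω, t = logRatio f g p q} ⊆
      {t | ∃ f ∈ dualSet Ω, ∃ g ∈ dualSet Ω, t = logRatio f g q p} := by
    rintro _ ⟨f, hf, g, hg, rfl⟩
    exact ⟨g, hg, f, hf, logRatio_comm f g p q⟩
  rw [CC, CC, (this p q).antisymm (this q p)]

theorem CC_triangle (hΩ : IsOpen Ω) (hne : (dualSet Ω).Nonempty)
    (hp : p ∈ Ω) (hq : q ∈ Ω) (hr : r ∈ Ω) : CC Ω p q ≤ CC Ω p r + CC Ω r q := by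
  obtain ⟨h, hh⟩ := hne
  refine csSup_le ⟨_, h, hh, h, hh, rfl⟩ ?_
  rintro _ ⟨f, hf, g, hg, rfl⟩
  rw [← logRatio_add hf hg hp hq hr]
  exact add_le_add (logRatio_le_CC hΩ hf hg hp hr) (logRatio_le_CC hΩ hf hg hr hq)

end CrossRatio

section Separation

variable {d : ℕ} {Ω : Set (PV d)} {f h : Module.Dual ℝ (Fin (d+1) → ℝ)} {p q : PV d}

theorem rep_notMem_span_singleton_rep (hpq : p ≠ q) : p.rep ∉ ℝ ∙ q.rep := by
  intro hmem
  obtain ⟨a, ha⟩ := Submodule.mem_span_singleton.1 hmem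
  apply hpq
  rw [← p.mk_rep, ← q.mk_rep]
  exact (mk_eq_mk_iff' ℝ _ _ _ _).2 ⟨a, ha⟩

theorem exists_dual_apply_rep_eq (hpq : p ≠ q) (c : ℝ) :
    ∃ φ : Module.Dual ℝ (Fin (d+1) → ℝ), φ p.rep = c ∧ φ q.rep = 0 := by
  obtain ⟨φ, hφp, hφq⟩ :=
    Submodule.exists_dual_map_eq_bot_of_notMem (rep_notMem_span_singleton_rep hpq)
      inferInstance
  have hφq' : φ q.rep = 0 := by
    simpa [hφq] using Submodule.mem_map_of_mem (f := φ) (Submodule.mem_span_singleton_self q.rep)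
  exact ⟨(c / φ p.rep) • φ, by simp [hφp], by simp [hφq']⟩

theorem mem_dualSet_of_forall_apply_rep_ne_zero (hp : p ∈ Ω) (hf : ∀ q ∈ Ω, f q.rep ≠ 0) :
    f ∈ dualSet Ω :=
  ⟨fun h0 => hf p hp (by simp [h0]), hf⟩

theorem exists_pos_forall_add_smul_apply_rep_ne_zero (hh : ∀ p ∈ closure Ω, h p.rep ≠ 0)
    (φ : Module.Dual ℝ (Fin (d+1) → ℝ)) : ∃ t : ℝ, 0 < t ∧ ∀ p ∈ Ω, (h + t • φ) p.rep ≠ 0 := by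
  obtain ⟨t, ht, hlt⟩ :=
    (isCompact_sphere_inter_cone isClosed_closure).exists_pos_forall_abs_mul_lt
      φ.continuous_of_finiteDimensional.continuousOn
      h.continuous_of_finiteDimensional.continuousOn
      fun v hv => apply_ne_zero_of_mem_cone hh hv.2
  refine ⟨t, ht, fun p hp hzero => ?_⟩
  have hv : ‖p.rep‖⁻¹ • p.rep ∈ sphere 0 1 ∩ cone (closure Ω) :=
    ⟨by rw [mem_sphere_zero_iff_norm]; exact norm_smul_inv_norm p.rep_nonzero,
      smul_mem_cone (rep_mem_cone (subset_closure hp)) (by simp [p.rep_nonzero])⟩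
  have hv0 : (h + t • φ) (‖p.rep‖⁻¹ • p.rep) = 0 := by rw [map_smul, hzero, smul_zero]
  rw [LinearMap.add_apply, LinearMap.smul_apply, smul_eq_mul, add_eq_zero_iff_neg_eq] at hv0
  have := hlt _ hv
  rw [← hv0, abs_neg] at this
  exact this.false

theorem exists_pos_logRatio (hh : ∀ p ∈ closure Ω, h p.rep ≠ 0) (hp : p ∈ Ω) (hq : q ∈ Ω)
    (hpq : p ≠ q) : ∃ f ∈ dualSet Ω, ∃ g ∈ dualSet Ω, 0 < logRatio f g p q := by
  obtain ⟨φ, hφp, hφq⟩ := exists_dual_apply_rep_eq hpq (h p.rep)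
  obtain ⟨t, ht, hne⟩ := exists_pos_forall_add_smul_apply_rep_ne_zero hh φ
  have hΩh : ∀ p ∈ Ω, h p.rep ≠ 0 := fun p hp => hh p (subset_closure hp)
  refine ⟨h + t • φ, mem_dualSet_of_forall_apply_rep_ne_zero hp hne,
    h, mem_dualSet_of_forall_apply_rep_ne_zero hp hΩh, ?_⟩
  have : logRatio (h + t • φ) h p q = Real.log (1 + t) := by
    have := hΩh p hp; have := hΩh q hq
    rw [logRatio, LinearMap.add_apply, LinearMap.add_apply, LinearMap.smul_apply,
      LinearMap.smul_apply, hφp, hφq, smul_eq_mul, smul_eq_mul, mul_zero, add_zero,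
      ← one_add_mul, abs_mul, abs_mul, abs_mul, abs_of_pos (by linarith : 0 < 1 + t)]
    field_simp
  rw [this]
  exact Real.log_pos (by linarith)

end Separation

theorem CC_eq_zero_iff {d : ℕ} {Ω : Set (PV d)} {h : Module.Dual ℝ (Fin (d+1) → ℝ)}
    (hΩ : IsOpen Ω) (hh : ∀ p ∈ closure Ω, h p.rep ≠ 0) {p q : PV d} (hp : p ∈ Ω)
    (hq : q ∈ Ω) : CC Ω p q = 0 ↔ p = q := by
  refine ⟨fun hzero => ?_, fun hpq => hpq ▸ CC_self Ω p⟩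
  by_contra hpq
  obtain ⟨f, hf, g, hg, hpos⟩ := exists_pos_logRatio hh hp hq hpq
  linarith [logRatio_le_CC hΩ hf hg hp hq]

/-- for a proper domain `Ω`, `C_Ω` is a metric on `Ω`: nonnegative,
symmetric, satisfies the triangle inequality, and vanishes exactly on the diagonal. -/
theorem CC_is_metric {d : ℕ} (Ω : Set (PV d)) (hΩ : IsProperDomain Ω) :
    (∀ p ∈ Ω, ∀ q ∈ Ω, 0 ≤ CC Ω p q) ∧
    (∀ p ∈ Ω, ∀ q ∈ Ω, CC Ω p q = CC Ω q p) ∧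
    (∀ p ∈ Ω, ∀ q ∈ Ω, ∀ r ∈ Ω, CC Ω p q ≤ CC Ω p r + CC Ω r q) ∧
    (∀ p ∈ Ω, ∀ q ∈ Ω, (CC Ω p q = 0 ↔ p = q)) := by
  obtain ⟨hopen, -, h, hh0, hh⟩ := hΩ
  have hne : (dualSet Ω).Nonempty := ⟨h, hh0, fun p hp => hh p (subset_closure hp)⟩
  exact ⟨fun p hp q hq => CC_nonneg hopen hne hp hq,
    fun p _ q _ => CC_comm Ω p q,
    fun p hp q hq r hr => CC_triangle hopen hne hp hq hr,
    fun p hp q hq => CC_eq_zero_iff hopen hh hp hq⟩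
end

section
/- Let F: ℝ^{d-1} → ℝ be a C² function with F(0) = 0, ∇F(0) = 0, and F(x) > 0 for all x ≠ 0. Suppose there exist λ > 1 and A ∈ O(d-1) such that λ^{2n} F(λ^{-n} Aⁿ x) = F(x) for all x ∈ ℝ^{d-1} and all n ∈ ℕ. Then F(x) = ½ Hess F(0)(x,x) for all x, and Hess F(0) is positive definite. -/
/-!
Second-order Taylor expansion at `0` gives `F y = ½ Q y + o(‖y‖²)` with `Q y = Hess F(0)(y,y)`.
Inserting `y = λ⁻ᵏ Aᵏ x` into the scaling identity and using `Q(λ⁻ᵏ v) = λ⁻²ᵏ Q v`, the error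
term gets multiplied by `λ²ᵏ ‖y‖² = ‖x‖²` only, so `½ Q (Aᵏ x) → F x`. Since `A` is an isometry
with orbits in compact balls, `x` is a cluster point of its own orbit, and continuity of `Q`
forces `F x = ½ Q x`.
-/

open Filter Topology Asymptotics Set Function

section Taylor

variable {E G : Type*} [NormedAddCommGroup E] [NormedSpace ℝ E]
  [NormedAddCommGroup G] [NormedSpace ℝ G] {f : E → G} {x₀ : E}

theorem ContDiffAt.isLittleO_sub_taylor_two (hf : ContDiffAt ℝ 2 f x₀) :
    (fun x => f x - f x₀ - fderiv ℝ f x₀ (x - x₀)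
      - (1 / 2 : ℝ) • fderiv ℝ (fderiv ℝ f) x₀ (x - x₀) (x - x₀))
      =o[𝓝 x₀] fun x => ‖x - x₀‖ ^ 2 := by
  set B := fderiv ℝ (fderiv ℝ f) x₀
  have hsymm : ∀ v w, B v w = B w v :=
    hf.isSymmSndFDerivAt (by simp [minSmoothness_of_isRCLikeNormedField])
  obtain ⟨r, hr, hball⟩ := Metric.eventually_nhds_iff_ball.1 (hf.eventually (by simp))
  have hdiff : ∀ x ∈ Metric.ball x₀ r, HasFDerivAt f (fderiv ℝ f x) x := fun x hx =>
    ((hball x hx).differentiableAt (by norm_num)).hasFDerivAt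
  have hB : HasFDerivAt (fderiv ℝ f) B x₀ :=
    ((hf.fderiv_right (m := 1) (by norm_num)).differentiableAt one_ne_zero).hasFDerivAt
  have hquad : ∀ x, HasFDerivAt (fun x => B (x - x₀) (x - x₀)) ((2 : ℝ) • B (x - x₀)) x := by
    intro x
    have := (B.hasFDerivAt.comp x ((hasFDerivAt_id x).sub_const x₀)).clm_apply
      ((hasFDerivAt_id x).sub_const x₀)
    refine this.congr_fderiv (ContinuousLinearMap.ext fun w => ?_)
    simp [hsymm w, two_smul]
  have hg : ∀ x ∈ Metric.ball x₀ r, HasFDerivWithinAt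
      (fun x => f x - fderiv ℝ f x₀ (x - x₀) - (1 / 2 : ℝ) • B (x - x₀) (x - x₀))
      (fderiv ℝ f x - fderiv ℝ f x₀ - B (x - x₀)) (Metric.ball x₀ r) x := by
    intro x hx
    have hlin := (fderiv ℝ f x₀).hasFDerivAt.comp x ((hasFDerivAt_id x).sub_const x₀)
    refine (((hdiff x hx).sub hlin).sub ((hquad x).const_smul (1 / 2 : ℝ))).hasFDerivWithinAt
      |>.congr_fderiv ?_
    ext w
    simp
  have hg' : (fun x => fderiv ℝ f x - fderiv ℝ f x₀ - B (x - x₀))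
      =o[𝓝[Metric.ball x₀ r] x₀] fun x => ‖x - x₀‖ ^ 1 := by
    simpa only [pow_one] using hB.isLittleO.norm_right.mono nhdsWithin_le_nhds
  have := (convex_ball x₀ r).isLittleO_pow_succ (Metric.mem_ball_self hr) hg hg'
  rw [nhdsWithin_eq_nhds.2 (Metric.ball_mem_nhds x₀ hr)] at this
  simpa [sub_right_comm _ (f x₀)] using this

end Taylor

theorem Isometry.iterate {X : Type*} [PseudoEMetricSpace X] {f : X → X} (hf : Isometry f) :
    ∀ n, Isometry f^[n]
  | 0 => isometry_id
  | n + 1 => by rw [iterate_succ']; exact hf.comp (Isometry.iterate hf n)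

theorem Isometry.mapClusterPt_iterate {X : Type*} [PseudoMetricSpace X] {f : X → X}
    (hf : Isometry f) {s : Set X} (hs : IsCompact s) (hfs : MapsTo f s s) {x : X} (hx : x ∈ s) :
    MapClusterPt x atTop fun k => f^[k] x := by
  rw [Metric.nhds_basis_ball.mapClusterPt_iff_frequently]
  intro r hr
  obtain ⟨z, -, φ, hφ, hlim⟩ := hs.tendsto_subseq fun k => hfs.iterate k hx
  obtain ⟨J, hJ⟩ := Metric.tendsto_atTop.1 hlim (r / 2) (half_pos hr)
  refine frequently_atTop.2 fun N => ⟨φ (N + J) - φ J, ?_, ?_⟩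
  · have := hφ.add_le_nat N J
    omega
  · have hsplit : f^[φ (N + J)] x = f^[φ J] (f^[φ (N + J) - φ J] x) := by
      rw [← iterate_add_apply, Nat.add_sub_cancel' (hφ.monotone (Nat.le_add_left J N))]
    rw [Metric.mem_ball, ← (hf.iterate (φ J)).dist_eq, ← hsplit]
    calc dist (f^[φ (N + J)] x) (f^[φ J] x)
        ≤ dist (f^[φ (N + J)] x) z + dist (f^[φ J] x) z := dist_triangle_right _ _ _
      _ < r / 2 + r / 2 := add_lt_add (hJ _ (Nat.le_add_left J N)) (hJ J le_rfl)
      _ = r := add_halves r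

theorem MapClusterPt.eq_of_tendsto_comp {α X Y : Type*} [TopologicalSpace X] [TopologicalSpace Y]
    [T2Space Y] {l : Filter α} {u : α → X} {x : X} {q : X → Y} {y : Y}
    (hx : MapClusterPt x l u) (hq : ContinuousAt q x) (h : Tendsto (q ∘ u) l (𝓝 y)) :
    q x = y := by
  by_contra hne
  have hcl : ClusterPt (q x) (𝓝 y) := (hx.continuousAt_comp hq).clusterPt.mono h
  exact hcl.neBot.ne (disjoint_nhds_nhds.2 hne).eq_bot

theorem tendsto_half_apply_of_rescaling {E : Type*} [NormedAddCommGroup E] [NormedSpace ℝ E]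
    {F : E → ℝ} {B : E →L[ℝ] E →L[ℝ] ℝ}
    (hR : (fun y => F y - (1 / 2) * B y y) =o[𝓝 0] fun y => ‖y‖ ^ 2)
    {lam : ℝ} (hlam : 1 < lam) {x : E} {u : ℕ → E} (hu : ∀ k, ‖u k‖ = ‖x‖)
    (hscale : ∀ k, lam ^ (2 * k) * F ((lam⁻¹) ^ k • u k) = F x) :
    Tendsto (fun k => (1 / 2) * B (u k) (u k)) atTop (𝓝 (F x)) := by
  have hlam0 : 0 < lam := zero_lt_one.trans hlam
  set y : ℕ → E := fun k => (lam⁻¹) ^ k • u k with hy_def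
  have hnorm_y : ∀ k, ‖y k‖ = (lam⁻¹) ^ k * ‖x‖ := fun k => by
    rw [hy_def, norm_smul, norm_pow, norm_inv, Real.norm_of_nonneg hlam0.le, hu]
  have hy : Tendsto y atTop (𝓝 0) := by
    rw [tendsto_zero_iff_norm_tendsto_zero, funext hnorm_y]
    simpa using (tendsto_pow_atTop_nhds_zero_of_lt_one (inv_nonneg.2 hlam0.le)
      (inv_lt_one_of_one_lt₀ hlam)).mul_const ‖x‖
  have hcancel : ∀ k, lam ^ (2 * k) * ((lam⁻¹) ^ k) ^ 2 = 1 := fun k => by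
    rw [← pow_mul, mul_comm k 2, ← mul_pow, mul_inv_cancel₀ hlam0.ne', one_pow]
  have hweight : ∀ k, lam ^ (2 * k) * ‖y k‖ ^ 2 = ‖x‖ ^ 2 := fun k => by
    rw [hnorm_y, mul_pow, ← mul_assoc, hcancel, one_mul]
  have herr : ∀ k, F x - (1 / 2) * B (u k) (u k)
      = lam ^ (2 * k) * (F (y k) - (1 / 2) * B (y k) (y k)) := fun k => by
    simp only [← hscale k, hy_def, map_smul, FunLike.coe_smul, Pi.smul_apply,
      smul_eq_mul]
    linear_combination (1 / 2 * B (u k) (u k)) * hcancel k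
  have hsmall : Tendsto (fun k => lam ^ (2 * k) * (F (y k) - (1 / 2) * B (y k) (y k)))
      atTop (𝓝 0) := by
    rw [← isLittleO_one_iff ℝ]
    refine ((isBigO_refl (fun k => lam ^ (2 * k)) atTop).mul_isLittleO
      (hR.comp_tendsto hy)).trans_isBigO ?_
    simpa only [comp_def, hweight] using isBigO_const_one ℝ (‖x‖ ^ 2) atTop
  have hlim := (tendsto_const_nhds (x := F x)).sub hsmall
  rw [sub_zero] at hlim
  exact hlim.congr fun k => by rw [← herr, sub_sub_cancel]

/-- if `F : ℝ^{d-1} → ℝ` is `C²` with `F(0)=0`, `∇F(0)=0`, `F > 0` away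
from `0`, and satisfies `λ^{2n} F(λ^{-n} Aⁿ x) = F(x)` for some `λ > 1` and orthogonal
`A`, then `F(x) = ½ Hess F(0)(x,x)` and `Hess F(0)` is positive definite. -/
theorem quadratic_from_scaling {n : ℕ} (F : EuclideanSpace ℝ (Fin n) → ℝ)
    (hF : ContDiff ℝ 2 F) (h0 : F 0 = 0) (hgrad : fderiv ℝ F 0 = 0)
    (hpos : ∀ x, x ≠ 0 → 0 < F x)
    (lam : ℝ) (hlam : 1 < lam)
    (A : EuclideanSpace ℝ (Fin n) ≃ₗᵢ[ℝ] EuclideanSpace ℝ (Fin n))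
    (hfun : ∀ (x : EuclideanSpace ℝ (Fin n)) (k : ℕ),
      lam ^ (2 * k) * F ((lam⁻¹) ^ k • (⇑A)^[k] x) = F x) :
    (∀ x, F x = (1 / 2) * iteratedFDeriv ℝ 2 F 0 ![x, x]) ∧
    (∀ x, x ≠ 0 → 0 < iteratedFDeriv ℝ 2 F 0 ![x, x]) := by
  set B := fderiv ℝ (fderiv ℝ F) 0
  have hR : (fun y => F y - (1 / 2) * B y y) =o[𝓝 0] fun y => ‖y‖ ^ 2 := by
    simpa [h0, hgrad] using hF.contDiffAt.isLittleO_sub_taylor_two (x₀ := 0)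
  have hquad : ∀ x, F x = (1 / 2) * B x x := fun x => by
    have hnorm : ∀ k, ‖(⇑A)^[k] x‖ = ‖x‖ := fun k => by
      simpa [iterate_fixed A.map_zero] using (A.isometry.iterate k).dist_eq x 0
    have hrec : MapClusterPt x atTop fun k => (⇑A)^[k] x :=
      A.isometry.mapClusterPt_iterate (isCompact_closedBall 0 ‖x‖)
        (fun y hy => by simpa using hy) (by simp)
    exact (hrec.eq_of_tendsto_comp (q := fun z => (1 / 2) * B z z) (by fun_prop)
      (tendsto_half_apply_of_rescaling hR hlam hnorm (hfun x))).symm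
  have hhess : ∀ x, iteratedFDeriv ℝ 2 F 0 ![x, x] = B x x := fun x => by
    simp [iteratedFDeriv_two_apply, B]
  refine ⟨fun x => by rw [hhess, hquad], fun x hx => ?_⟩
  rw [hhess]
  linarith [hquad x ▸ hpos x hx]
end
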